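/- Suppose all points of S = R ∪ B ∪ P lie on a common circle. Then in a minimum red-blue-purple spanning graph of (R,B,P), no purple edge crosses any other edge; that is, for every purple edge uv and every edge wx with {u,v} ≠ {w,x}, the segments uv and wx do not intersect in a point that lies in the relative interior of both segments. -/

import Mathlib

open scoped Classical

noncomputable section

/-- The Euclidean plane. -/
abbrev Pt : Type := EuclideanSpace ℝ (Fin 2)

/-- The simple graph on the plane whose edge set is the finite set `E`. -/
def graphOf (E : Finset (Sym2 Pt)) : SimpleGraph Pt where
  Adj x y := x ≠ y ∧ s(x, y) ∈ E
  symm := ⟨fun x y ⟨hne, he⟩ => ⟨hne.symm, by rwa [Sym2.eq_swap]⟩⟩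
  loopless := ⟨fun x ⟨hne, _⟩ => hne rfl⟩

/-- Euclidean length of an edge. -/
def edgeLen (e : Sym2 Pt) : ℝ :=
  Sym2.lift ⟨fun x y => dist x y, fun _ _ => dist_comm _ _⟩ e

/-- Total Euclidean length of a finite edge set. -/
def weight (E : Finset (Sym2 Pt)) : ℝ := ∑ e ∈ E, edgeLen e

/-- `E` is the edge set of a red-blue-purple spanning graph of `(R, B, P)`. -/
def IsRBP (R B P : Finset Pt) (E : Finset (Sym2 Pt)) : Prop :=
  (∀ e ∈ E, ¬ e.IsDiag) ∧
  (∀ e ∈ E, ∀ x ∈ e, x ∈ R ∪ B ∪ P) ∧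
  ((graphOf E).induce (↑(R ∪ P) : Set Pt)).Connected ∧
  ((graphOf E).induce (↑(B ∪ P) : Set Pt)).Connected

/-- `E` is the edge set of a minimum red-blue-purple spanning graph of `(R, B, P)`. -/
def IsMinRBP (R B P : Finset Pt) (E : Finset (Sym2 Pt)) : Prop :=
  IsRBP R B P E ∧ ∀ E', IsRBP R B P E' → weight E ≤ weight E'

/-- Two segments cross: they meet in a point in the relative interior (open
segment) of both. -/
def Crosses (u v w x : Pt) : Prop :=
  ∃ z : Pt, z ∈ openSegment ℝ u v ∧ z ∈ openSegment ℝ w x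


/-! Suppose a purple edge `uv` of a minimum RBP spanning graph crosses another edge `wx`. As the
four endpoints lie on a circle, one of the chords `ux`, `vx` is shorter than `wx` (and likewise with
the letters permuted), and each re-pairing `{uw, vx}`, `{ux, vw}` is shorter in total than
`{uv, wx}`. Deleting `wx` leaves `u` connected to `w` or to `x` in each of the red-purple and
blue-purple graphs; if it is the same endpoint in both, a shorter chord from `u` or `v` to the other
endpoint repairs both graphs, contradicting minimality. Otherwise `w` and `x` are vertices of both
graphs, and we look at which of the cross pairs `{u, v} × {w, x}` remain linked after deleting both
edges. -/

open Metric
open scoped RealInnerProductSpace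

section Chords

variable {V : Type*} [NormedAddCommGroup V] [InnerProductSpace ℝ V] {c : V} {r : ℝ}
  {a b p q z : V}

theorem eq_of_wbtw_of_mem_openSegment (ha : a ∈ sphere c r) (hb : b ∈ sphere c r)
    (hp : p ∈ sphere c r) (hab : a ≠ b) (hz : z ∈ openSegment ℝ a b) (hp' : Wbtw ℝ a z p) :
    p = b := by
  by_contra hpb
  have hza : z ≠ a := by
    rintro rfl
    exact hab (left_mem_openSegment_iff.1 hz)
  have hpa : a ≠ p := by
    rintro rfl
    exact hza ((wbtw_self_iff ℝ).1 hp')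
  have hz' := mem_segment_iff_wbtw.1 (openSegment_subset_segment ℝ a b hz)
  have hb' : b ∈ line[ℝ, a, z] :=
    hz'.collinear.mem_affineSpan_of_mem_of_ne (by simp) (by simp) (by simp) hza.symm
  have hp'' : p ∈ line[ℝ, a, z] :=
    hp'.collinear.mem_affineSpan_of_mem_of_ne (by simp) (by simp) (by simp) hza.symm
  have hcol : Collinear ℝ {a, b, p} :=
    (collinear_insert_insert_of_mem_affineSpan_pair hb' hp'').subset (by grind)
  have hsph : EuclideanGeometry.Cospherical ({a, b, p} : Set V) := by
    refine ⟨c, r, ?_⟩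
    simp only [Set.mem_insert_iff, Set.mem_singleton_iff]
    rintro _ (rfl | rfl | rfl) <;> assumption
  exact affineIndependent_iff_not_collinear_set.1
    (hsph.affineIndependent_of_ne hab hpa (Ne.symm hpb)) hcol

theorem dist_sq_eq_of_mem_sphere (hp : p ∈ sphere c r) (hb : b ∈ sphere c r) :
    dist p b ^ 2 = 2 * r ^ 2 - 2 * ⟪p - c, b - c⟫ := by
  rw [Metric.mem_sphere, dist_eq_norm] at hp hb
  rw [dist_eq_norm, show p - b = (p - c) - (b - c) by abel, norm_sub_sq_real, hp, hb]
  ring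

theorem inner_smul_add_smul_sub_left {s t : ℝ} (hst : s + t = 1) (y : V) :
    ⟪s • a + t • b - c, y⟫ = s * ⟪a - c, y⟫ + t * ⟪b - c, y⟫ := by
  have : s • a + t • b - c = s • (a - c) + t • (b - c) := by
    rw [smul_sub, smul_sub, sub_add_sub_comm, ← add_smul, hst, one_smul]
  rw [this, inner_add_left, real_inner_smul_left, real_inner_smul_left]

theorem dist_lt_or_dist_lt_of_mem_openSegment (ha : a ∈ sphere c r) (hb : b ∈ sphere c r)
    (hp : p ∈ sphere c r) (hq : q ∈ sphere c r) (hab : a ≠ b)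
    (hz : z ∈ openSegment ℝ a b) (hz' : z ∈ segment ℝ p q) :
    dist p b < dist a b ∨ dist q b < dist a b := by
  -- On the sphere `dist · b` decreases as `f := ⟪· - c, b - c⟫` increases. As `f` is affine and
  -- `f a < f b`, we get `f a < f z`, so `f a < f p` or `f a < f q`.
  by_contra! h
  obtain ⟨s, t, hs, ht, hst, rfl⟩ := hz
  obtain ⟨s', t', hs', ht', hst', hz'⟩ := hz'
  have hab' : 0 < dist a b := dist_pos.2 hab
  have hfb : ⟪a - c, b - c⟫ < ⟪b - c, b - c⟫ := by
    nlinarith [dist_sq_eq_of_mem_sphere ha hb, dist_sq_eq_of_mem_sphere hb hb, dist_self b]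
  have hfp : ⟪p - c, b - c⟫ ≤ ⟪a - c, b - c⟫ := by
    nlinarith [dist_sq_eq_of_mem_sphere ha hb, dist_sq_eq_of_mem_sphere hp hb,
      pow_le_pow_left₀ hab'.le h.1 2]
  have hfq : ⟪q - c, b - c⟫ ≤ ⟪a - c, b - c⟫ := by
    nlinarith [dist_sq_eq_of_mem_sphere ha hb, dist_sq_eq_of_mem_sphere hq hb,
      pow_le_pow_left₀ hab'.le h.2 2]
  have hfz := (inner_smul_add_smul_sub_left (c := c) hst (b - c)).symm.trans
    (hz' ▸ inner_smul_add_smul_sub_left hst' (b - c))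
  obtain rfl : s = 1 - t := by linarith
  obtain rfl : s' = 1 - t' := by linarith
  nlinarith [mul_le_mul_of_nonneg_left hfp hs', mul_le_mul_of_nonneg_left hfq ht',
    mul_lt_mul_of_pos_left hfb ht]

theorem dist_add_dist_lt_of_mem_openSegment (ha : a ∈ sphere c r) (hb : b ∈ sphere c r)
    (hp : p ∈ sphere c r) (hab : a ≠ b) (hpb : p ≠ b)
    (hz : z ∈ openSegment ℝ a b) (hz' : z ∈ openSegment ℝ p q) :
    dist a p + dist b q < dist a b + dist p q := by
  have h₁ := (mem_segment_iff_wbtw.1 (openSegment_subset_segment ℝ a b hz)).dist_add_dist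
  have h₂ := (mem_segment_iff_wbtw.1 (openSegment_subset_segment ℝ p q hz')).dist_add_dist
  have h₃ : dist a p < dist a z + dist z p :=
    dist_lt_dist_add_dist_iff.2 fun h => hpb (eq_of_wbtw_of_mem_openSegment ha hb hp hab hz h)
  linarith [dist_triangle b z q, dist_comm z b, dist_comm z p]

end Chords

section Crosses

variable {ctr : Pt} {r : ℝ} {u v w x : Pt}

theorem Crosses.symm (h : Crosses u v w x) : Crosses w x u v :=
  let ⟨z, h₁, h₂⟩ := h
  ⟨z, h₂, h₁⟩

theorem Crosses.swap_left (h : Crosses u v w x) : Crosses v u w x :=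
  let ⟨z, h₁, h₂⟩ := h
  ⟨z, openSegment_symm ℝ u v ▸ h₁, h₂⟩

theorem Crosses.swap_right (h : Crosses u v w x) : Crosses u v x w :=
  h.symm.swap_left.symm

theorem Crosses.ne (hu : u ∈ sphere ctr r) (hv : v ∈ sphere ctr r) (hx : x ∈ sphere ctr r)
    (huv : u ≠ v) (hne : s(u, v) ≠ s(w, x)) (h : Crosses u v w x) : u ≠ w := by
  rintro rfl
  obtain ⟨z, h₁, h₂⟩ := h
  refine hne ?_
  rw [eq_of_wbtw_of_mem_openSegment hu hv hx huv h₁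
    (mem_segment_iff_wbtw.1 (openSegment_subset_segment ℝ u x h₂))]

end Crosses

theorem SimpleGraph.Reachable.induction_of_adj {α : Type*} {G : SimpleGraph α} {Q : α → Prop}
    {a t : α} (h : G.Reachable a t) (ha : Q a) (hQ : ∀ x y, G.Adj x y → Q x → Q y) : Q t := by
  rw [SimpleGraph.reachable_iff_reflTransGen] at h
  induction h with
  | refl => exact ha
  | tail _ hxy ih => exact hQ _ _ hxy ih

section Joins

variable {A : Set Pt} {E F : Finset (Sym2 Pt)} {a b c d p q t : Pt}

/-- Vacuous unless `p, q ∈ A`, so that an edge leaving `A` imposes no condition. -/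
def Joins (A : Set Pt) (E : Finset (Sym2 Pt)) (p q : Pt) : Prop :=
  ∀ (hp : p ∈ A) (hq : q ∈ A), ((graphOf E).induce A).Reachable ⟨p, hp⟩ ⟨q, hq⟩

theorem Joins.refl : Joins A E p p := fun _ _ => .rfl

theorem Joins.symm (h : Joins A E p q) : Joins A E q p := fun hq hp => (h hp hq).symm

theorem Joins.trans (h₁ : Joins A E p q) (h₂ : Joins A E q t) (hq : q ∈ A) : Joins A E p t :=
  fun hp ht => (h₁ hp hq).trans (h₂ hq ht)

theorem Joins.mono (h : Joins A E p q) (hEF : E ⊆ F) : Joins A F p q :=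
  fun hp hq => (h hp hq).mono fun _ _ (hxy : ((graphOf E).induce A).Adj _ _) => ⟨hxy.1, hEF hxy.2⟩

theorem Joins.of_notMem_left (hp : p ∉ A) : Joins A E p q := fun hp' => absurd hp' hp

theorem Joins.of_notMem_right (hq : q ∉ A) : Joins A E p q := fun _ hq' => absurd hq' hq

theorem joins_of_mem (h : s(p, q) ∈ E) : Joins A E p q := by
  by_cases hpq : p = q
  · subst hpq
    exact Joins.refl
  · exact fun _ _ => SimpleGraph.Adj.reachable ⟨hpq, h⟩

theorem joins_of_connected (h : ((graphOf E).induce A).Connected) : Joins A E p q :=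
  fun _ _ => h.preconnected _ _

theorem connected_of_forall_joins (hE : ((graphOf E).induce A).Connected)
    (h : ∀ p q, s(p, q) ∈ E → Joins A F p q) : ((graphOf F).induce A).Connected := by
  have := hE.nonempty
  refine ⟨fun x y => (hE.preconnected x y).induction_of_adj .rfl fun y z hyz hxy => ?_⟩
  exact hxy.trans (h y z hyz.2 y.2 z.2)

theorem Joins.erase_or (h : Joins A E a t) :
    Joins A (E.erase s(a, b)) a t ∨ Joins A (E.erase s(a, b)) b t := by
  by_cases ha : a ∈ A
  swap
  · exact .inl (.of_notMem_left ha)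
  by_cases ht : t ∈ A
  swap
  · exact .inl (.of_notMem_right ht)
  refine (h ha ht).induction_of_adj (Q := fun y : A => Joins A (E.erase s(a, b)) a y ∨
    Joins A (E.erase s(a, b)) b y) (.inl .refl) fun y z hyz hy => ?_
  by_cases he : s(y.1, z.1) = s(a, b)
  · rcases Sym2.eq_iff.1 he with ⟨_, hz⟩ | ⟨_, hz⟩ <;> rw [← hz]
    exacts [.inr .refl, .inl .refl]
  · have hyz' : Joins A (E.erase s(a, b)) y z := joins_of_mem (Finset.mem_erase.2 ⟨he, hyz.2⟩)
    exact hy.imp (fun h => h.trans hyz' y.2) (fun h => h.trans hyz' y.2)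

theorem joins_of_erase_or (hab : s(a, b) ∈ E) (hb : b ∈ A)
    (h : Joins A (E.erase s(a, b)) a c ∨ Joins A (E.erase s(a, b)) b c) : Joins A E a c :=
  h.elim (fun h => h.mono (Finset.erase_subset _ _))
    fun h => (joins_of_mem hab).trans (h.mono (Finset.erase_subset _ _)) hb

theorem joins_cross_of_connected (hE : ((graphOf E).induce A).Connected) (u v w x : Pt) :
    Joins A ((E.erase s(w, x)).erase s(u, v)) u w ∨ Joins A ((E.erase s(w, x)).erase s(u, v)) v w ∨
      Joins A ((E.erase s(w, x)).erase s(u, v)) u x ∨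
        Joins A ((E.erase s(w, x)).erase s(u, v)) v x := by
  rcases (joins_of_connected hE : Joins A E w u).erase_or (b := x) with h | h
  · rcases h.symm.erase_or (b := v) with h | h <;> tauto
  · rcases h.symm.erase_or (b := v) with h | h <;> tauto

theorem connected_of_erase_subset (hE : ((graphOf E).induce A).Connected)
    (hF : E.erase s(a, b) ⊆ F) (h : Joins A F a b) : ((graphOf F).induce A).Connected :=
  connected_of_forall_joins hE fun p q hpq => by
    by_cases he : s(p, q) = s(a, b)
    · rcases Sym2.eq_iff.1 he with ⟨rfl, rfl⟩ | ⟨rfl, rfl⟩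
      exacts [h, h.symm]
    · exact joins_of_mem (hF (Finset.mem_erase.2 ⟨he, hpq⟩))

theorem connected_of_erase_erase_subset (hE : ((graphOf E).induce A).Connected)
    (hF : (E.erase s(c, d)).erase s(a, b) ⊆ F) (hab : Joins A F a b) (hcd : Joins A F c d) :
    ((graphOf F).induce A).Connected :=
  connected_of_erase_subset
    (connected_of_erase_subset hE (Finset.subset_insert_iff.2 hF)
      (hcd.mono (Finset.subset_insert _ _)))
    (Finset.erase_insert_subset _ _) hab

theorem connected_insert_erase_of_joins (hE : ((graphOf E).induce A).Connected) (ha : a ∈ A)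
    (hb : b ∈ A) (hab : s(a, b) ∈ E.erase s(c, d)) (hp : p = a ∨ p = b)
    (h : Joins A (E.erase s(c, d)) a c ∨ c ∉ A ∨ d ∉ A) :
    ((graphOf (insert s(p, d) (E.erase s(c, d)))).induce A).Connected := by
  have hsub := Finset.subset_insert s(p, d) (E.erase s(c, d))
  refine connected_of_erase_subset hE hsub ?_
  rcases h with h | hc | hd
  · have hap : Joins A (insert s(p, d) (E.erase s(c, d))) a p := by
      rcases hp with rfl | rfl
      exacts [.refl, joins_of_mem (hsub hab)]
    have hpA : p ∈ A := by rcases hp with rfl | rfl <;> assumption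
    exact ((h.mono hsub).symm.trans hap ha).trans (joins_of_mem (Finset.mem_insert_self _ _)) hpA
  · exact .of_notMem_left hc
  · exact .of_notMem_right hd

theorem connected_insert_insert_of_joins (hE : ((graphOf E).induce A).Connected) (ha : a ∈ A)
    (hb : b ∈ A) (hc : c ∈ A) (hd : d ∈ A)
    (h : Joins A ((E.erase s(c, d)).erase s(a, b)) a d ∨
      Joins A ((E.erase s(c, d)).erase s(a, b)) b c) :
    ((graphOf (insert s(a, c) (insert s(b, d) ((E.erase s(c, d)).erase s(a, b))))).induce
      A).Connected := by
  set F := insert s(a, c) (insert s(b, d) ((E.erase s(c, d)).erase s(a, b)))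
  have hH : (E.erase s(c, d)).erase s(a, b) ⊆ F :=
    (Finset.subset_insert _ _).trans (Finset.subset_insert _ _)
  have hac : Joins A F a c := joins_of_mem (Finset.mem_insert_self _ _)
  have hbd : Joins A F b d := joins_of_mem (Finset.mem_insert_of_mem (Finset.mem_insert_self _ _))
  refine connected_of_erase_erase_subset hE hH ?_ ?_ <;> rcases h with h | h <;>
    replace h := h.mono hH
  · exact h.trans hbd.symm hd
  · exact hac.trans h.symm hc
  · exact hac.symm.trans h ha
  · exact h.symm.trans hbd hb

end Joins

section MinRBP

theorem edgeLen_mk (p q : Pt) : edgeLen s(p, q) = dist p q := rfl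

theorem edgeLen_nonneg (e : Sym2 Pt) : 0 ≤ edgeLen e := by
  induction e using Sym2.ind with
  | _ p q => exact dist_nonneg (x := p) (y := q)

theorem weight_erase {E : Finset (Sym2 Pt)} {e : Sym2 Pt} (he : e ∈ E) :
    weight (E.erase e) = weight E - edgeLen e :=
  Finset.sum_erase_eq_sub he

theorem weight_insert_le (E : Finset (Sym2 Pt)) (e : Sym2 Pt) :
    weight (insert e E) ≤ edgeLen e + weight E := by
  by_cases he : e ∈ E
  · rw [Finset.insert_eq_of_mem he]
    linarith [edgeLen_nonneg e]
  · rw [weight, Finset.sum_insert he, weight]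

variable {R B P : Finset Pt} {E : Finset (Sym2 Pt)} {a b c d p q p' q' : Pt}

theorem IsRBP.ne_of_mem (h : IsRBP R B P E) (he : s(p, q) ∈ E) : p ≠ q :=
  fun hpq => h.1 _ he (Sym2.mk_isDiag_iff.2 hpq)

theorem IsRBP.mem_left (h : IsRBP R B P E) (he : s(p, q) ∈ E) : p ∈ R ∪ B ∪ P :=
  h.2.1 _ he p (Sym2.mem_mk_left _ _)

theorem IsRBP.mem_right (h : IsRBP R B P E) (he : s(p, q) ∈ E) : q ∈ R ∪ B ∪ P :=
  h.2.1 _ he q (Sym2.mem_mk_right _ _)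

theorem mem_union_union_of_mem_inter (h : p ∈ (R ∪ P) ∩ (B ∪ P)) : p ∈ R ∪ B ∪ P := by
  simp only [Finset.mem_inter, Finset.mem_union] at h ⊢
  tauto

theorem IsMinRBP.weight_le (hE : IsMinRBP R B P E) {F : Finset (Sym2 Pt)}
    (hF : ∀ e ∈ F, e ∈ E ∨ ∃ p ∈ R ∪ B ∪ P, ∃ q ∈ R ∪ B ∪ P, p ≠ q ∧ e = s(p, q))
    (h₁ : ((graphOf F).induce (↑(R ∪ P) : Set Pt)).Connected)
    (h₂ : ((graphOf F).induce (↑(B ∪ P) : Set Pt)).Connected) : weight E ≤ weight F := by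
  refine hE.2 F ⟨fun e he => ?_, fun e he => ?_, h₁, h₂⟩
  · rcases hF e he with he | ⟨p, -, q, -, hpq, rfl⟩
    exacts [hE.1.1 e he, fun h => hpq (Sym2.mk_isDiag_iff.1 h)]
  · rcases hF e he with he | ⟨p, hp, q, hq, -, rfl⟩
    · exact hE.1.2.1 e he
    · rintro y hy
      rcases Sym2.mem_iff.1 hy with rfl | rfl <;> assumption

theorem IsMinRBP.false_of_exchange (hE : IsMinRBP R B P E) {e : Sym2 Pt} (he : e ∈ E)
    (hp : p ∈ R ∪ B ∪ P) (hq : q ∈ R ∪ B ∪ P) (hpq : p ≠ q) (hlt : dist p q < edgeLen e)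
    (h₁ : ((graphOf (insert s(p, q) (E.erase e))).induce (↑(R ∪ P) : Set Pt)).Connected)
    (h₂ : ((graphOf (insert s(p, q) (E.erase e))).induce (↑(B ∪ P) : Set Pt)).Connected) :
    False := by
  have := hE.weight_le (fun f hf => ?_) h₁ h₂
  · linarith [weight_insert_le (E.erase e) s(p, q), weight_erase he, edgeLen_mk p q]
  · rcases Finset.mem_insert.1 hf with rfl | hf
    exacts [.inr ⟨p, hp, q, hq, hpq, rfl⟩, .inl (Finset.mem_of_mem_erase hf)]

theorem IsMinRBP.false_of_exchange₂ (hE : IsMinRBP R B P E) {e e' : Sym2 Pt} (he : e ∈ E)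
    (he' : e' ∈ E.erase e) (hp : p ∈ R ∪ B ∪ P) (hq : q ∈ R ∪ B ∪ P) (hpq : p ≠ q)
    (hp' : p' ∈ R ∪ B ∪ P) (hq' : q' ∈ R ∪ B ∪ P) (hpq' : p' ≠ q')
    (hlt : dist p q + dist p' q' < edgeLen e + edgeLen e')
    (h₁ : ((graphOf (insert s(p, q) (insert s(p', q') ((E.erase e).erase e')))).induce
      (↑(R ∪ P) : Set Pt)).Connected)
    (h₂ : ((graphOf (insert s(p, q) (insert s(p', q') ((E.erase e).erase e')))).induce
      (↑(B ∪ P) : Set Pt)).Connected) : False := by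
  have := hE.weight_le (fun f hf => ?_) h₁ h₂
  · linarith [weight_insert_le (insert s(p', q') ((E.erase e).erase e')) s(p, q),
      weight_insert_le ((E.erase e).erase e') s(p', q'), weight_erase he, weight_erase he',
      edgeLen_mk p q, edgeLen_mk p' q']
  · rcases Finset.mem_insert.1 hf with rfl | hf
    · exact .inr ⟨p, hp, q, hq, hpq, rfl⟩
    rcases Finset.mem_insert.1 hf with rfl | hf
    · exact .inr ⟨p', hp', q', hq', hpq', rfl⟩
    · exact .inl (Finset.mem_of_mem_erase (Finset.mem_of_mem_erase hf))

variable {ctr : Pt} {r : ℝ}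

theorem IsMinRBP.false_of_crosses_of_joins_erase (hE : IsMinRBP R B P E)
    (hcirc : ∀ q ∈ R ∪ B ∪ P, q ∈ sphere ctr r) (hab : s(a, b) ∈ E) (hcd : s(c, d) ∈ E)
    (hne : s(a, b) ≠ s(c, d)) (ha : a ∈ (R ∪ P) ∩ (B ∪ P)) (hb : b ∈ (R ∪ P) ∩ (B ∪ P))
    (hcr : Crosses a b c d)
    (h₁ : Joins (↑(R ∪ P)) (E.erase s(c, d)) a c ∨ c ∉ R ∪ P ∨ d ∉ R ∪ P)
    (h₂ : Joins (↑(B ∪ P)) (E.erase s(c, d)) a c ∨ c ∉ B ∪ P ∨ d ∉ B ∪ P) : False := by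
  have haS := hcirc a (mem_union_union_of_mem_inter ha)
  have hbS := hcirc b (mem_union_union_of_mem_inter hb)
  have hcS := hcirc c (hE.1.mem_left hcd)
  have hdS := hcirc d (hE.1.mem_right hcd)
  have hab' := hE.1.ne_of_mem hab
  have had : a ≠ d := hcr.swap_right.ne haS hbS hcS hab' (by rwa [Sym2.eq_swap (a := d)])
  have hbd : b ≠ d := hcr.swap_left.swap_right.ne hbS haS hcS hab'.symm
    (by rwa [Sym2.eq_swap (a := d), Sym2.eq_swap (a := b)])
  have habcd : s(a, b) ∈ E.erase s(c, d) := Finset.mem_erase.2 ⟨hne, hab⟩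
  have exchange : ∀ p, p = a ∨ p = b → p ≠ d → p ∈ R ∪ B ∪ P → dist p d < dist c d → False :=
    fun p hp hpd hpS hlt => hE.false_of_exchange hcd hpS (hE.1.mem_right hcd) hpd hlt
      (connected_insert_erase_of_joins hE.1.2.2.1 (Finset.mem_inter.1 ha).1
        (Finset.mem_inter.1 hb).1 habcd hp h₁)
      (connected_insert_erase_of_joins hE.1.2.2.2 (Finset.mem_inter.1 ha).2
        (Finset.mem_inter.1 hb).2 habcd hp h₂)
  obtain ⟨z, hz₁, hz₂⟩ := hcr
  rcases dist_lt_or_dist_lt_of_mem_openSegment hcS hdS haS hbS (hE.1.ne_of_mem hcd) hz₂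
    (openSegment_subset_segment ℝ a b hz₁) with h | h
  · exact exchange a (.inl rfl) had (mem_union_union_of_mem_inter ha) h
  · exact exchange b (.inr rfl) hbd (mem_union_union_of_mem_inter hb) h

theorem IsMinRBP.false_of_crosses_of_joins_erase_erase (hE : IsMinRBP R B P E)
    (hcirc : ∀ q ∈ R ∪ B ∪ P, q ∈ sphere ctr r) (hab : s(a, b) ∈ E) (hcd : s(c, d) ∈ E)
    (hne : s(a, b) ≠ s(c, d)) (ha : a ∈ (R ∪ P) ∩ (B ∪ P)) (hb : b ∈ (R ∪ P) ∩ (B ∪ P))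
    (hcr : Crosses a b c d)
    (h₁ : Joins (↑(R ∪ P)) ((E.erase s(c, d)).erase s(a, b)) a c ∨
      Joins (↑(R ∪ P)) ((E.erase s(c, d)).erase s(a, b)) b c)
    (h₂ : Joins (↑(B ∪ P)) ((E.erase s(c, d)).erase s(a, b)) a c ∨
      Joins (↑(B ∪ P)) ((E.erase s(c, d)).erase s(a, b)) b c) : False :=
  have habcd : s(a, b) ∈ E.erase s(c, d) := Finset.mem_erase.2 ⟨hne, hab⟩
  hE.false_of_crosses_of_joins_erase hcirc hab hcd hne ha hb hcr
    (.inl (joins_of_erase_or habcd (Finset.mem_inter.1 hb).1 h₁))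
    (.inl (joins_of_erase_or habcd (Finset.mem_inter.1 hb).2 h₂))

theorem IsMinRBP.false_of_crosses_of_joins_pairing (hE : IsMinRBP R B P E)
    (hcirc : ∀ q ∈ R ∪ B ∪ P, q ∈ sphere ctr r) (hab : s(a, b) ∈ E) (hcd : s(c, d) ∈ E)
    (hne : s(a, b) ≠ s(c, d)) (ha : a ∈ (R ∪ P) ∩ (B ∪ P)) (hb : b ∈ (R ∪ P) ∩ (B ∪ P))
    (hc : c ∈ (R ∪ P) ∩ (B ∪ P)) (hd : d ∈ (R ∪ P) ∩ (B ∪ P)) (hcr : Crosses a b c d)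
    (h₁ : Joins (↑(R ∪ P)) ((E.erase s(c, d)).erase s(a, b)) a d ∨
      Joins (↑(R ∪ P)) ((E.erase s(c, d)).erase s(a, b)) b c)
    (h₂ : Joins (↑(B ∪ P)) ((E.erase s(c, d)).erase s(a, b)) a d ∨
      Joins (↑(B ∪ P)) ((E.erase s(c, d)).erase s(a, b)) b c) : False := by
  have haS := mem_union_union_of_mem_inter ha
  have hbS := mem_union_union_of_mem_inter hb
  have hcS := mem_union_union_of_mem_inter hc
  have hdS := mem_union_union_of_mem_inter hd
  have hab' := hE.1.ne_of_mem hab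
  have hac : a ≠ c := hcr.ne (hcirc a haS) (hcirc b hbS) (hcirc d hdS) hab' hne
  have hbc : b ≠ c := hcr.swap_left.ne (hcirc b hbS) (hcirc a haS) (hcirc d hdS) hab'.symm
    (by rwa [Sym2.eq_swap (a := b)])
  have hbd : b ≠ d := hcr.swap_left.swap_right.ne (hcirc b hbS) (hcirc a haS) (hcirc c hcS)
    hab'.symm (by rwa [Sym2.eq_swap (a := d), Sym2.eq_swap (a := b)])
  obtain ⟨z, hz₁, hz₂⟩ := hcr
  have hlt := dist_add_dist_lt_of_mem_openSegment (hcirc a haS) (hcirc b hbS) (hcirc c hcS)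
    hab' hbc.symm hz₁ hz₂
  refine hE.false_of_exchange₂ hcd (Finset.mem_erase.2 ⟨hne, hab⟩) haS hcS hac hbS hdS hbd
    (by rw [edgeLen_mk, edgeLen_mk]; linarith) ?_ ?_
  · exact connected_insert_insert_of_joins hE.1.2.2.1 (Finset.mem_inter.1 ha).1
      (Finset.mem_inter.1 hb).1 (Finset.mem_inter.1 hc).1 (Finset.mem_inter.1 hd).1 h₁
  · exact connected_insert_insert_of_joins hE.1.2.2.2 (Finset.mem_inter.1 ha).2
      (Finset.mem_inter.1 hb).2 (Finset.mem_inter.1 hc).2 (Finset.mem_inter.1 hd).2 h₂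

variable {u v w x : Pt}

theorem IsMinRBP.not_crosses_of_not_mem_inter (hE : IsMinRBP R B P E)
    (hcirc : ∀ q ∈ R ∪ B ∪ P, q ∈ sphere ctr r) (huv : s(u, v) ∈ E) (hwx : s(w, x) ∈ E)
    (hne : s(u, v) ≠ s(w, x)) (hu : u ∈ (R ∪ P) ∩ (B ∪ P)) (hv : v ∈ (R ∪ P) ∩ (B ∪ P))
    (hwx' : ¬(w ∈ (R ∪ P) ∩ (B ∪ P) ∧ x ∈ (R ∪ P) ∩ (B ∪ P))) : ¬Crosses u v w x := by
  intro hcr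
  have hxw : s(x, w) = s(w, x) := Sym2.eq_swap
  have J₁ := ((joins_of_connected hE.1.2.2.1 : Joins _ E w u).erase_or (b := x)).imp
    Joins.symm Joins.symm
  have J₂ := ((joins_of_connected hE.1.2.2.2 : Joins _ E w u).erase_or (b := x)).imp
    Joins.symm Joins.symm
  -- `wx` leaves one of the two vertex sets, and in that graph deleting it needs no repair.
  have X := hE.false_of_crosses_of_joins_erase hcirc huv hwx hne hu hv hcr
  have W := hE.false_of_crosses_of_joins_erase hcirc huv (by rwa [hxw]) (by rwa [hxw]) hu hv
    hcr.swap_right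
  rw [hxw] at W
  simp only [Finset.mem_inter, not_and_or] at hwx'
  tauto

theorem IsMinRBP.not_crosses_of_mem_inter (hE : IsMinRBP R B P E)
    (hcirc : ∀ q ∈ R ∪ B ∪ P, q ∈ sphere ctr r) (huv : s(u, v) ∈ E) (hwx : s(w, x) ∈ E)
    (hne : s(u, v) ≠ s(w, x)) (hu : u ∈ (R ∪ P) ∩ (B ∪ P)) (hv : v ∈ (R ∪ P) ∩ (B ∪ P))
    (hw : w ∈ (R ∪ P) ∩ (B ∪ P)) (hx : x ∈ (R ∪ P) ∩ (B ∪ P)) : ¬Crosses u v w x := by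
  intro hcr
  have hxw : s(x, w) = s(w, x) := Sym2.eq_swap
  have hvu : s(v, u) = s(u, v) := Sym2.eq_swap
  have hH : (E.erase s(u, v)).erase s(w, x) = (E.erase s(w, x)).erase s(u, v) :=
    Finset.erase_right_comm
  have N₁ := joins_cross_of_connected hE.1.2.2.1 u v w x
  have N₂ := joins_cross_of_connected hE.1.2.2.2 u v w x
  set J₁ := Joins (↑(R ∪ P)) ((E.erase s(w, x)).erase s(u, v))
  set J₂ := Joins (↑(B ∪ P)) ((E.erase s(w, x)).erase s(u, v))
  have X : ¬((J₁ u w ∨ J₁ v w) ∧ (J₂ u w ∨ J₂ v w)) := fun ⟨h₁, h₂⟩ =>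
    hE.false_of_crosses_of_joins_erase_erase hcirc huv hwx hne hu hv hcr h₁ h₂
  have W : ¬((J₁ u x ∨ J₁ v x) ∧ (J₂ u x ∨ J₂ v x)) := fun ⟨h₁, h₂⟩ =>
    hE.false_of_crosses_of_joins_erase_erase hcirc huv (by rwa [hxw]) (by rwa [hxw]) hu hv
      hcr.swap_right (by rwa [hxw]) (by rwa [hxw])
  have V : ¬((J₁ u w ∨ J₁ u x) ∧ (J₂ u w ∨ J₂ u x)) := fun ⟨h₁, h₂⟩ =>
    hE.false_of_crosses_of_joins_erase_erase hcirc hwx huv hne.symm hw hx hcr.symm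
      (by rw [hH]; exact h₁.imp .symm .symm) (by rw [hH]; exact h₂.imp .symm .symm)
  have U : ¬((J₁ v w ∨ J₁ v x) ∧ (J₂ v w ∨ J₂ v x)) := fun ⟨h₁, h₂⟩ =>
    hE.false_of_crosses_of_joins_erase_erase hcirc hwx (by rwa [hvu]) (by rwa [hvu, ne_comm])
      hw hx hcr.symm.swap_right (by rw [hvu, hH]; exact h₁.imp .symm .symm)
      (by rw [hvu, hH]; exact h₂.imp .symm .symm)
  have P₁ : ¬((J₁ u x ∨ J₁ v w) ∧ (J₂ u x ∨ J₂ v w)) := fun ⟨h₁, h₂⟩ =>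
    hE.false_of_crosses_of_joins_pairing hcirc huv hwx hne hu hv hw hx hcr h₁ h₂
  have P₂ : ¬((J₁ u w ∨ J₁ v x) ∧ (J₂ u w ∨ J₂ v x)) := fun ⟨h₁, h₂⟩ =>
    hE.false_of_crosses_of_joins_pairing hcirc huv (by rwa [hxw]) (by rwa [hxw]) hu hv hx hw
      hcr.swap_right (by rwa [hxw]) (by rwa [hxw])
  -- Two cross pairs linked in the two graphs either share an endpoint, and replacing the edge
  -- through it by a shorter chord works, or are disjoint, and re-pairing the endpoints works.
  clear_value J₁ J₂
  rcases N₁ with h₁ | h₁ | h₁ | h₁ <;> rcases N₂ with h₂ | h₂ | h₂ | h₂ <;>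
    simp only [h₁, h₂, true_or, or_true, and_self, not_true_eq_false] at X W V U P₁ P₂

end MinRBP

theorem circle_minRBP_purple_edge_crosses_nothing_general (R B P : Finset Pt)
    (ctr : Pt) (r : ℝ)
    (hcirc : ∀ q ∈ R ∪ B ∪ P, dist q ctr = r)
    (E : Finset (Sym2 Pt)) (hE : IsMinRBP R B P E) :
    ∀ u v w x : Pt, u ∈ P → v ∈ P → s(u, v) ∈ E → s(w, x) ∈ E →
      s(u, v) ≠ s(w, x) → ¬ Crosses u v w x := by
  intro u v w x hu hv huv hwx hne
  have hP : ∀ y ∈ P, y ∈ (R ∪ P) ∩ (B ∪ P) := fun y hy =>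
    Finset.mem_inter.2 ⟨Finset.mem_union_right _ hy, Finset.mem_union_right _ hy⟩
  by_cases hwx' : w ∈ (R ∪ P) ∩ (B ∪ P) ∧ x ∈ (R ∪ P) ∩ (B ∪ P)
  · exact hE.not_crosses_of_mem_inter hcirc huv hwx hne (hP u hu) (hP v hv) hwx'.1 hwx'.2
  · exact hE.not_crosses_of_not_mem_inter hcirc huv hwx hne (hP u hu) (hP v hv) hwx'

/-- if all points lie on a common circle, then in a minimum RBP
spanning graph no purple edge crosses any other edge. -/
theorem circle_minRBP_purple_edge_crosses_nothing (R B P : Finset Pt)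
    (hRB : Disjoint R B) (hRP : Disjoint R P) (hBP : Disjoint B P)
    (ctr : Pt) (r : ℝ) (hr : 0 < r)
    (hcirc : ∀ q ∈ R ∪ B ∪ P, dist q ctr = r)
    (E : Finset (Sym2 Pt)) (hE : IsMinRBP R B P E) :
    ∀ u v w x : Pt, u ∈ P → v ∈ P → s(u, v) ∈ E → s(w, x) ∈ E →
      s(u, v) ≠ s(w, x) → ¬ Crosses u v w x :=
  circle_minRBP_purple_edge_crosses_nothing_general R B P ctr r hcirc E hE
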